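/- arXiv:1110.1980 — 5 statements merged into one kernel-verified Lean document; each statement's English description precedes it below -/
import Mathlib

section
/- Let 0 < L < H and let n_H, n_L be nonnegative integers. With λ(L) = H/(2H−L), λ(H) = 1, p(L) = L·H/(2H−L), p(H) = H·(1 − H/(2H−L)) + L·H/(2H−L), the total revenue n_H·p(H) + n_L·p(L) equals (n_H·H + n_L·L)·H/(2H−L). In particular this lottery is a ((2H−L)/H)-approximation of OPT = n_H·H + n_L·L. -/
/-! With `λ = H / (2H − L)`, both prices are the bid scaled by `λ`: `p(L) = Lλ` by definition,
and `p(H) = H(1 − λ) + Lλ = Hλ` because `λ(2H − L) = H`. So the revenue is `λ · OPT`. -/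

lemma high_price_eq_mul_lottery {K : Type*} [Field K] {L H : K} (hd : 2 * H - L ≠ 0) :
    H * (1 - H / (2 * H - L)) + L * (H / (2 * H - L)) = H * (H / (2 * H - L)) := by
  linear_combination -div_mul_cancel₀ H hd

/-- Two-value domain: with `λ(L) = H/(2H−L)`, `λ(H) = 1` and the associated prices,
the total revenue equals `(n_H·H + n_L·L)·H/(2H−L)`, so the lottery is a
`((2H−L)/H)`-approximation of `OPT = n_H·H + n_L·L`. -/
theorem stmt_4 (L H : ℝ) (hL : 0 < L) (hLH : L < H) (nH nL : ℕ)
    (pL pH : ℝ)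
    (hpL : pL = L * (H / (2 * H - L)))
    (hpH : pH = H * (1 - H / (2 * H - L)) + L * (H / (2 * H - L))) :
    (nH : ℝ) * pH + (nL : ℝ) * pL = ((nH : ℝ) * H + (nL : ℝ) * L) * H / (2 * H - L) ∧
    (nH : ℝ) * pH + (nL : ℝ) * pL ≥ ((nH : ℝ) * H + (nL : ℝ) * L) / ((2 * H - L) / H) := by
  have hd : 2 * H - L ≠ 0 := by linarith
  have hrevenue : (nH : ℝ) * pH + (nL : ℝ) * pL
      = ((nH : ℝ) * H + (nL : ℝ) * L) * H / (2 * H - L) := by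
    rw [hpH, hpL, high_price_eq_mul_lottery hd]
    ring
  exact ⟨hrevenue, ((div_div_eq_mul_div _ _ _).trans hrevenue.symm).le⟩
end

section
/- Let 0 < L < H and α ≥ 1. If α ≤ (2H−L)/H, then there is no real x ∈ [0,1] satisfying both L·x > L/α and H − (H−L)·x > H/α. Equivalently, the single-bidder truthful lottery cannot approximate OPT strictly better than (2H−L)/H on the domain {L,H}. -/
/-- Single-bidder lower bound on two-value domains: if `1 ≤ α ≤ (2H−L)/H` then no
`x ∈ [0,1]` satisfies both `L·x > L/α` and `H − (H−L)·x > H/α`. -/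
theorem stmt_5 (L H α : ℝ) (hL : 0 < L) (hLH : L < H)
    (hα1 : 1 ≤ α) (hα : α ≤ (2 * H - L) / H) :
    ¬ ∃ x : ℝ, x ∈ Set.Icc (0 : ℝ) 1 ∧ L * x > L / α ∧ H - (H - L) * x > H / α := by
  rintro ⟨x, ⟨hx0, hx1⟩, h1, h2⟩
  have hα0 : (0:ℝ) < α := by linarith
  have hH : (0:ℝ) < H := by linarith
  have hα' : α * H ≤ 2 * H - L := (le_div_iff₀ hH).mp hα
  have h1' : α * (L * x) > L := by
    have := (div_lt_iff₀ hα0).mp h1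
    linarith [mul_comm (L / α) α]
  have h2' : α * (H - (H - L) * x) > H := by
    have := (div_lt_iff₀ hα0).mp h2
    linarith
  nlinarith [mul_pos hL hα0, sq_nonneg (α - 1), sq_nonneg x]
end

section
/- Let n ≥ 1, let 0 < L < H, and let α ≤ (2H−L)/H with α ≥ 1. Then the following system of 2^n strict linear inequalities in the variables x_i(b_{−i}) ∈ ℝ (for i ∈ [n], b_{−i} ∈ {L,H}^{n−1}) has no solution: for every bid vector b ∈ {L,H}^n, −(H−L)·∑_{i: b_i = H} x_i(b_{−i}) + L·∑_{i: b_i = L} x_i(b_{−i}) > −(n_H(b)·(α−1)/α)·H + (n_L(b)/α)·L, where n_H(b) and n_L(b) count the entries of b equal to H and L respectively. -/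
/-!
Weight the inequality of bid vector `b` by `k(b) = r ^ n_H(b)` with `r = L / (H - L)` and add
them up. A variable `x i b` appears only in the inequalities of `b` and of `b` with its `i`-th
bit flipped, with coefficients `-(H - L)` (bit `H`) and `L` (bit `L`); since the weight of the
`H` version is `r` times that of the `L` version and `r * (H - L) = L`, the two contributions
cancel, so the weighted left-hand sides sum to `0` for every `x`. On the right-hand side,
`α ≤ (2H - L)/H` means `(α - 1) H ≤ H - L`, so each right-hand side is at least
`(-(H - L) n_H(b) + L n_L(b)) / α`, which is the left-hand side at `x ≡ 1 / α`; their weighted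
sum is therefore `0` as well, giving the contradiction `0 > 0`.
-/

open Finset

variable {ι : Type*} [Fintype ι] {R : Type*} [CommRing R]

theorem mul_sum_filter_add_mul_sum_filter (b : ι → Bool) (a c : R) (g : ι → R) :
    a * ∑ i ∈ univ.filter (fun i => b i = true), g i
        + c * ∑ i ∈ univ.filter (fun i => b i = false), g i
      = ∑ i, (if b i = true then a else c) * g i := by
  simp only [ite_mul, sum_ite, mul_sum, Bool.not_eq_true]

variable [DecidableEq ι]

theorem card_filter_update_true_eq (b : ι → Bool) (i : ι) :
    #{j | Function.update b i true j = true} = #{j | Function.update b i false j = true} + 1 := by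
  rw [← card_insert_of_notMem (s := {j | Function.update b i false j = true}) (a := i) (by simp)]
  congr 1
  ext j
  by_cases hj : j = i <;> simp [Function.update_apply, hj]

theorem sum_pow_card_mul_ite_eq_zero {r a c : R} (hrac : r * a = c) (i : ι)
    (f : (ι → Bool) → R) (hf : ∀ b b', (∀ j, j ≠ i → b j = b' j) → f b = f b') :
    ∑ b : ι → Bool, r ^ #{j | b j = true} * ((if b i = true then -a else c) * f b) = 0 := by
  have hpair : ∀ b : ι → Bool, b i = true →
      r ^ #{j | b j = true} * (-a * f b)
        + r ^ #{j | Function.update b i false j = true} * (c * f (Function.update b i false))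
        = 0 := by
    intro b hb
    have hcard := card_filter_update_true_eq b i
    rw [Function.update_eq_self_iff.mpr hb.symm] at hcard
    rw [hcard, hf (Function.update b i false) b fun j hj => Function.update_of_ne hj _ _, ← hrac]
    ring
  refine sum_involution (fun b _ => Function.update b i (!b i)) (fun b _ => ?_)
    (fun b _ _ h => by simpa using congr_fun h i) (fun _ _ => mem_univ _) (fun b _ => by simp)
  cases hb : b i
  · have := hpair (Function.update b i true) (by simp)
    simp only [Function.update_idem, ← hb, Function.update_eq_self] at this
    simpa [hb, add_comm] using this
  · simpa [hb] using hpair b hb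

theorem sum_pow_card_mul_eq_zero {r a c : R} (hrac : r * a = c) (x : ι → (ι → Bool) → R)
    (hx : ∀ i b b', (∀ j, j ≠ i → b j = b' j) → x i b = x i b') :
    ∑ b : ι → Bool, r ^ #{j | b j = true} *
      (-a * ∑ i ∈ univ.filter (fun i => b i = true), x i b
        + c * ∑ i ∈ univ.filter (fun i => b i = false), x i b) = 0 := by
  simp_rw [mul_sum_filter_add_mul_sum_filter, mul_sum]
  rw [sum_comm]
  exact sum_eq_zero fun i _ => sum_pow_card_mul_ite_eq_zero hrac i (x i) (hx i)

theorem stmt_7_general (n : ℕ) (L H α : ℝ) (hL : 0 < L) (hLH : L < H)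
    (hα1 : 1 ≤ α) (hα : α ≤ (2 * H - L) / H) :
    ¬ ∃ x : Fin n → (Fin n → Bool) → ℝ,
      (∀ i b b', (∀ j, j ≠ i → b j = b' j) → x i b = x i b') ∧
      ∀ b : Fin n → Bool,
        -(H - L) * (∑ i ∈ Finset.univ.filter (fun i => b i = true), x i b)
          + L * (∑ i ∈ Finset.univ.filter (fun i => b i = false), x i b)
        > -(((Finset.univ.filter (fun i => b i = true)).card : ℝ) * (α - 1) / α) * H
          + (((Finset.univ.filter (fun i => b i = false)).card : ℝ) / α) * L := by
  rintro ⟨x, hx, hineq⟩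
  have hrac : L / (H - L) * (H - L) = L := div_mul_cancel₀ L (sub_ne_zero.2 hLH.ne')
  have hα0 : 0 < α := by linarith
  have hαH : (α - 1) * H ≤ H - L := by
    rw [le_div_iff₀ (by linarith)] at hα
    linarith
  have hcounts := sum_pow_card_mul_eq_zero hrac (fun (_ : Fin n) _ => (1 : ℝ)) fun _ _ _ _ => rfl
  simp only [sum_const, nsmul_eq_mul, mul_one] at hcounts
  refine lt_irrefl (0 : ℝ) (calc
    (0 : ℝ) = (∑ b : Fin n → Bool, (L / (H - L)) ^ #{j | b j = true} *
        (-(H - L) * #{i | b i = true} + L * #{i | b i = false})) / α := by rw [hcounts, zero_div]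
    _ ≤ ∑ b : Fin n → Bool, (L / (H - L)) ^ #{j | b j = true} *
        (-(#{i | b i = true} * (α - 1) / α) * H + #{i | b i = false} / α * L) := by
      simp_rw [sum_div, mul_div_assoc]
      gcongr with b
      rw [← sub_nonneg, show ∀ p q : ℝ, -(p * ((α - 1) / α)) * H + q / α * L
          - (-(H - L) * p + L * q) / α = p * (H - L - (α - 1) * H) / α from fun p q => by ring]
      exact div_nonneg (mul_nonneg (Nat.cast_nonneg _) (sub_nonneg.2 hαH)) hα0.le
    _ < _ := sum_lt_sum_of_nonempty univ_nonempty fun b _ =>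
      mul_lt_mul_of_pos_left (hineq b) (pow_pos (div_pos hL (sub_pos.2 hLH)) _)
    _ = 0 := sum_pow_card_mul_eq_zero hrac x hx)

/-- Infeasibility of the linear system encoding a truthful lottery on `{L,H}ⁿ`
beating approximation ratio `α ≤ (2H−L)/H`. Bid vectors are `b : Fin n → Bool`,
`true` meaning bid `H`. The variable `x i b` stands for `λ_i(L, b_{−i})`, which
may depend only on the other bidders' bids. -/
theorem stmt_7 (n : ℕ) (hn : 1 ≤ n) (L H α : ℝ) (hL : 0 < L) (hLH : L < H)
    (hα1 : 1 ≤ α) (hα : α ≤ (2 * H - L) / H) :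
    ¬ ∃ x : Fin n → (Fin n → Bool) → ℝ,
      (∀ i b b', (∀ j, j ≠ i → b j = b' j) → x i b = x i b') ∧
      ∀ b : Fin n → Bool,
        -(H - L) * (∑ i ∈ Finset.univ.filter (fun i => b i = true), x i b)
          + L * (∑ i ∈ Finset.univ.filter (fun i => b i = false), x i b)
        > -(((Finset.univ.filter (fun i => b i = true)).card : ℝ) * (α - 1) / α) * H
          + (((Finset.univ.filter (fun i => b i = false)).card : ℝ) / α) * L :=
  stmt_7_general n L H α hL hLH hα1 hα
end

section
/- Let d ≥ 1, n ≥ 1, B_1,...,B_d > 0. Define for each composition (n_1,...,n_d) of n the weight k = B_d^{n − n_d}/∏_{r=1}^{d−1} B_r^{n_r} and the constant Δ = ((d−1)/d)·n_1·B_1 − ∑_{t=2}^{d} n_t·B_t/d. Then ∑ over all (n_1,...,n_d) with ∑ n_t = n of multinomial(n; n_1,...,n_d)·k·Δ = 0. -/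
/-!
With `x_r = 1/B_r` the weight is `k = B_d^n ∏ x_r^{n_r}`, so the sum splits into the quantities
`S_t = ∑ multinomial(n; n_1,…,n_d) n_t B_t ∏ x_r^{n_r}`. The absorption identity
`multinomial(n; …, n_t, …) n_t = n multinomial(n - 1; …, n_t - 1, …)` and the multinomial theorem
give `S_t = n B_t x_t (∑ x_r)^{n-1} = n (∑ x_r)^{n-1}`, independent of `t`. Hence the coefficient
`(d-1)/d` on `S_1` exactly balances the `d-1` terms `S_t / d`, `t ≥ 2`.
-/

open Finset Function
open scoped Nat

section
variable {ι : Type*} [DecidableEq ι] {s : Finset ι} {t : ι}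

@[to_additive]
lemma Finset.prod_update_mul {M : Type*} [CommMonoid M] (ht : t ∈ s) (g : ι → M) (a : M) :
    ∏ i ∈ s, update g t (g t * a) i = (∏ i ∈ s, g i) * a := by
  rw [prod_update_of_mem ht, prod_eq_mul_prod_sdiff_singleton_of_mem ht g, mul_right_comm]

lemma Finset.prod_pow_update_succ {M : Type*} [CommMonoid M] (ht : t ∈ s) (x : ι → M)
    (g : ι → ℕ) : ∏ r ∈ s, x r ^ update g t (g t + 1) r = (∏ r ∈ s, x r ^ g r) * x t := by
  simp only [apply_update (fun r k => x r ^ k), pow_succ, prod_update_mul ht]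

lemma Nat.multinomial_update_succ_mul (ht : t ∈ s) (g : ι → ℕ) :
    multinomial s (update g t (g t + 1)) * (g t + 1) = (∑ i ∈ s, g i + 1) * multinomial s g := by
  have hfact : ∏ i ∈ s, (update g t (g t + 1) i)! = (∏ i ∈ s, (g i)!) * (g t + 1) := by
    simp only [apply_update (fun _ k => k !), factorial_succ, mul_comm (g t + 1),
      prod_update_mul ht]
  apply Nat.eq_of_mul_eq_mul_left (prod_pos fun i _ => factorial_pos (g i))
  calc (∏ i ∈ s, (g i)!) * (multinomial s (update g t (g t + 1)) * (g t + 1))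
      = (∏ i ∈ s, (update g t (g t + 1) i)!) * multinomial s (update g t (g t + 1)) := by
        rw [hfact]; ring
    _ = (∑ i ∈ s, g i + 1)! := by rw [multinomial_spec, sum_update_add ht]
    _ = (∏ i ∈ s, (g i)!) * ((∑ i ∈ s, g i + 1) * multinomial s g) := by
        rw [factorial_succ, ← multinomial_spec]; ring

lemma Function.update_pred_succ {f : ι → ℕ} (hf : f t ≠ 0) :
    update (update f t (f t - 1)) t (update f t (f t - 1) t + 1) = f := by
  simp [Nat.sub_add_cancel (Nat.pos_of_ne_zero hf)]

lemma Finset.update_succ_mem_piAntidiag_iff {g : ι → ℕ} {n : ℕ} (ht : t ∈ s) :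
    update g t (g t + 1) ∈ piAntidiag s (n + 1) ↔ g ∈ piAntidiag s n := by
  simp only [mem_piAntidiag, sum_update_add ht, Nat.add_right_cancel_iff]
  refine and_congr_right fun _ => forall_congr' fun i => ?_
  rcases eq_or_ne i t with rfl | hit
  · simp [ht]
  · rw [update_of_ne hit]

lemma Finset.sum_piAntidiag_multinomial_mul_apply_mul_prod_pow {R : Type*} [CommSemiring R]
    (ht : t ∈ s) (x : ι → R) (n : ℕ) :
    ∑ f ∈ piAntidiag s n, (Nat.multinomial s f : R) * f t * ∏ r ∈ s, x r ^ f r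
      = n * x t * (∑ r ∈ s, x r) ^ (n - 1) := by
  cases n with
  | zero => simp
  | succ n =>
    -- the terms with `f t = 0` vanish; the others are `f = g + e_t` with `g` a composition of `n`
    rw [add_tsub_cancel_right, sum_pow_eq_sum_piAntidiag s x n, mul_sum,
      ← sum_filter_of_ne (p := fun f => f t ≠ 0) fun f _ h hft => h (by simp [hft])]
    refine (sum_nbij' (fun g => update g t (g t + 1)) (fun f => update f t (f t - 1))
      ?_ ?_ ?_ ?_ ?_).symm
    · intro g hg
      exact mem_filter.2 ⟨(update_succ_mem_piAntidiag_iff ht).2 hg, by simp⟩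
    · intro f hf
      obtain ⟨hf, hft⟩ := mem_filter.1 hf
      rw [← update_pred_succ hft, update_succ_mem_piAntidiag_iff ht] at hf
      exact hf
    · intro g _
      simp
    · intro f hf
      exact update_pred_succ (mem_filter.1 hf).2
    · intro g hg
      have hmult := Nat.multinomial_update_succ_mul ht g
      rw [(mem_piAntidiag.1 hg).1] at hmult
      rw [prod_pow_update_succ ht, update_self, ← Nat.cast_mul, hmult]
      push_cast
      ring

lemma Finset.sum_piAntidiag_multinomial_mul_apply_mul_mul_prod_inv_pow {K : Type*} [Field K]
    (ht : t ∈ s) {B : ι → K} (hB : B t ≠ 0) (n : ℕ) :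
    ∑ f ∈ piAntidiag s n, (Nat.multinomial s f : K) * f t * B t * ∏ r ∈ s, (B r)⁻¹ ^ f r
      = n * (∑ r ∈ s, (B r)⁻¹) ^ (n - 1) := by
  calc ∑ f ∈ piAntidiag s n, (Nat.multinomial s f : K) * f t * B t * ∏ r ∈ s, (B r)⁻¹ ^ f r
      = B t * ∑ f ∈ piAntidiag s n, (Nat.multinomial s f : K) * f t * ∏ r ∈ s, (B r)⁻¹ ^ f r := by
        rw [mul_sum]; exact sum_congr rfl fun _ _ => by ring
    _ = n * (∑ r ∈ s, (B r)⁻¹) ^ (n - 1) := by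
        rw [sum_piAntidiag_multinomial_mul_apply_mul_prod_pow ht]
        field_simp

lemma pow_sub_div_prod_erase_pow {ι K : Type*} [Fintype ι] [DecidableEq ι] [Field K]
    {B : ι → K} {f : ι → ℕ} {i : ι} {n : ℕ} (hB : B i ≠ 0) (hf : f i ≤ n) :
    B i ^ (n - f i) / ∏ r ∈ univ.erase i, B r ^ f r = B i ^ n * ∏ r, (B r)⁻¹ ^ f r := by
  rw [pow_sub₀ _ hB hf, ← mul_prod_erase univ _ (mem_univ i)]
  simp only [inv_pow, prod_inv_distrib]
  ring

end

theorem stmt_13_general (d n : ℕ) (B : Fin d → ℝ)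
    (hpos : ∀ r, 0 < B r)
    (i0 il : Fin d) :
    ∑ f ∈ Finset.Nat.antidiagonalTuple d n,
        (Nat.multinomial Finset.univ f : ℝ)
          * (B il ^ (n - f il) / ∏ r ∈ Finset.univ.erase il, B r ^ f r)
          * (((d : ℝ) - 1) / d * (f i0 : ℝ) * B i0
              - ∑ t ∈ Finset.univ.erase i0, (f t : ℝ) * B t / d)
      = 0 := by
  set X : (Fin d → ℕ) → Fin d → ℝ :=
    fun f t => (Nat.multinomial univ f : ℝ) * f t * B t * ∏ r, (B r)⁻¹ ^ f r
  have hX (t : Fin d) : ∑ f ∈ piAntidiag univ n, X f t = n * (∑ r, (B r)⁻¹) ^ (n - 1) :=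
    sum_piAntidiag_multinomial_mul_apply_mul_mul_prod_inv_pow (mem_univ t) (hpos t).ne' n
  have hterm : ∀ f ∈ piAntidiag univ n,
      (Nat.multinomial univ f : ℝ) * (B il ^ (n - f il) / ∏ r ∈ univ.erase il, B r ^ f r)
          * (((d : ℝ) - 1) / d * (f i0 : ℝ) * B i0 - ∑ t ∈ univ.erase i0, (f t : ℝ) * B t / d)
        = B il ^ n / d * ((d - 1) * X f i0 - ∑ t ∈ univ.erase i0, X f t) := by
    intro f hf
    have hle : f il ≤ n := (mem_piAntidiag.1 hf).1 ▸ single_le_sum (by simp) (mem_univ il)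
    rw [pow_sub_div_prod_erase_pow (hpos il).ne' hle, mul_sub, mul_sub, mul_sum, mul_sum]
    congr 1
    · ring
    · exact sum_congr rfl fun t _ => by ring
  rw [← piAntidiag_univ_fin_eq_antidiagonalTuple, sum_congr rfl hterm, ← mul_sum,
    sum_sub_distrib, ← mul_sum, sum_comm, hX, sum_congr rfl fun t _ => hX t,
    sum_erase_eq_sub (mem_univ i0)]
  simp only [sum_const, card_fin, nsmul_eq_mul]
  ring

/-- Cancellation lemma: the Carver-weighted sum of the constant terms vanishes.
For each composition `(n_1,…,n_d)` of `n`, with weight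
`k = B_d^{n−n_d} / ∏_{r=1}^{d−1} B_r^{n_r}` and constant
`Δ = ((d−1)/d)·n_1·B_1 − ∑_{t=2}^d n_t·B_t/d`, the sum
`∑ multinomial(n; n_1,…,n_d)·k·Δ` over all compositions is `0`.
Indices `1,…,d` are encoded by `Fin d`, with `i0` the first and `il` the last. -/
theorem stmt_13 (d n : ℕ) (hd : 1 ≤ d) (hn : 1 ≤ n) (B : Fin d → ℝ)
    (hpos : ∀ r, 0 < B r)
    (i0 il : Fin d) (hi0 : (i0 : ℕ) = 0) (hil : (il : ℕ) = d - 1) :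
    ∑ f ∈ Finset.Nat.antidiagonalTuple d n,
        (Nat.multinomial Finset.univ f : ℝ)
          * (B il ^ (n - f il) / ∏ r ∈ Finset.univ.erase il, B r ^ f r)
          * (((d : ℝ) - 1) / d * (f i0 : ℝ) * B i0
              - ∑ t ∈ Finset.univ.erase i0, (f t : ℝ) * B t / d)
      = 0 :=
  stmt_13_general d n B hpos i0 il
end

section
/- Let H > 1, n ≥ 1, and let b_1, ..., b_n be i.i.d. random variables each with ℙ(b_i > y) = 1/y for y ∈ [1,H) and ℙ(b_i = H) = 1/H. Suppose for each i a price P_i (a random variable independent of b_i) is offered, and bidder i pays P_i if b_i > P_i and 0 otherwise. Then the expected total revenue is at most n, while E[∑_i b_i] = n·(ln(H)+1). Hence the expected revenue is at most E[OPT]/(ln(H)+1), and there exists a realization of the bids on which the revenue is at most OPT/(ln(H)+1). -/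
/-!
A bidder facing a price `y` that does not depend on her bid pays `y` with probability
`ℙ(b > y)`, and the equal-revenue tail `ℙ(b > y) = 1/y` makes `y · ℙ(b > y) ≤ 1` for every `y`.
Since `P_i` is independent of `b_i`, conditioning on `P_i` bounds the expected payment of
bidder `i` by `1`, so the expected revenue is at most `n`. By the layer-cake formula
`E[b_i] = ∫₀^∞ ℙ(b_i > t) dt = 1 + ∫₁^H dt/t = log H + 1`. A random variable is somewhere at
most its mean, which applied to `revenue - OPT/(log H + 1)` gives the realization.
-/

open MeasureTheory ProbabilityTheory Set

section EqualRevenue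

variable {Ω : Type*} [MeasurableSpace Ω] {μ : Measure Ω} {H : ℝ} {X : Ω → ℝ}

lemma measure_lt_eq_zero_of_le (hX : ∀ ω, X ω ≤ H) {t : ℝ} (ht : H ≤ t) :
    μ {ω | t < X ω} = 0 := by
  simp [((hX _).trans ht).not_gt]

lemma measure_lt_eq_one_of_lt [IsProbabilityMeasure μ] (hX : ∀ ω, 1 ≤ X ω) {t : ℝ}
    (ht : t < 1) : μ {ω | t < X ω} = 1 := by
  simp [ht.trans_le (hX _)]

lemma ofReal_mul_measure_lt_le_one [IsProbabilityMeasure μ] (hrange : ∀ ω, X ω ∈ Icc 1 H)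
    (htail : ∀ y ∈ Ico 1 H, μ {ω | y < X ω} = ENNReal.ofReal (1 / y)) (y : ℝ) :
    ENNReal.ofReal y * μ {ω | y < X ω} ≤ 1 := by
  rcases lt_or_ge y 1 with hy1 | hy1
  · rw [measure_lt_eq_one_of_lt (fun ω => (hrange ω).1) hy1, mul_one]
    exact ENNReal.ofReal_le_one.2 hy1.le
  rcases lt_or_ge y H with hyH | hyH
  · rw [htail y ⟨hy1, hyH⟩, ← ENNReal.ofReal_mul (by linarith), mul_one_div_cancel (by linarith),
      ENNReal.ofReal_one]
  · rw [measure_lt_eq_zero_of_le (fun ω => (hrange ω).2) hyH, mul_zero]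
    exact zero_le_one

lemma setLIntegral_Ico_ofReal_one_div {a b : ℝ} (ha : 0 < a) (hab : a ≤ b) :
    ∫⁻ t in Ico a b, ENNReal.ofReal (1 / t) = ENNReal.ofReal (Real.log (b / a)) := by
  have hpos : ∀ t ∈ Ico a b, 0 < t := fun t ht => ha.trans_le ht.1
  have hint : IntegrableOn (fun t : ℝ => 1 / t) (Ico a b) :=
    (ContinuousOn.integrableOn_Icc (continuousOn_const.div continuousOn_id
      fun t ht => (ha.trans_le ht.1).ne')).mono_set Ico_subset_Icc_self
  rw [← ofReal_integral_eq_lintegral_ofReal hint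
      (ae_restrict_of_forall_mem measurableSet_Ico fun t ht => (one_div_pos.2 (hpos t ht)).le),
    integral_Ico_eq_integral_Ioo, ← integral_Ioc_eq_integral_Ioo,
    ← intervalIntegral.integral_of_le hab, integral_one_div_of_pos ha (ha.trans_le hab)]

lemma integral_eq_log_add_one [IsProbabilityMeasure μ] (hH : 1 ≤ H) (hXm : Measurable X)
    (hrange : ∀ ω, X ω ∈ Icc 1 H)
    (htail : ∀ y ∈ Ico 1 H, μ {ω | y < X ω} = ENNReal.ofReal (1 / y)) :
    ∫ ω, X ω ∂μ = Real.log H + 1 := by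
  have hX0 : 0 ≤ᵐ[μ] X := ae_of_all _ fun ω => zero_le_one.trans (hrange ω).1
  have hsplit : Ioi (0 : ℝ) = Ioo 0 1 ∪ (Ico 1 H ∪ Ici H) := by
    rw [Ico_union_Ici_eq_Ici hH, Ioo_union_Ici_eq_Ioi zero_lt_one]
  have hdisj₁ : Disjoint (Ioo (0 : ℝ) 1) (Ico 1 H ∪ Ici H) := by
    rw [Ico_union_Ici_eq_Ici hH]
    exact (Iio_disjoint_Ici le_rfl).mono_left Ioo_subset_Iio_self
  have hdisj₂ : Disjoint (Ico 1 H) (Ici H) :=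
    (Iio_disjoint_Ici le_rfl).mono_left Ico_subset_Iio_self
  have below_one : ∫⁻ t in Ioo 0 1, μ {ω | t < X ω} = 1 := by
    rw [setLIntegral_congr_fun measurableSet_Ioo
      fun t ht => measure_lt_eq_one_of_lt (fun ω => (hrange ω).1) ht.2]
    simp
  have middle : ∫⁻ t in Ico 1 H, μ {ω | t < X ω} = ENNReal.ofReal (Real.log H) := by
    rw [setLIntegral_congr_fun measurableSet_Ico htail,
      setLIntegral_Ico_ofReal_one_div zero_lt_one hH, div_one]
  have above_H : ∫⁻ t in Ici H, μ {ω | t < X ω} = 0 := by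
    rw [setLIntegral_congr_fun measurableSet_Ici
      fun t ht => measure_lt_eq_zero_of_le (fun ω => (hrange ω).2) ht]
    simp
  rw [integral_eq_lintegral_of_nonneg_ae hX0 hXm.aestronglyMeasurable,
    lintegral_eq_lintegral_meas_lt μ hX0 hXm.aemeasurable, hsplit,
    lintegral_union (measurableSet_Ico.union measurableSet_Ici) hdisj₁,
    lintegral_union measurableSet_Ici hdisj₂, below_one, middle, above_H, add_zero,
    ← ENNReal.ofReal_one, ← ENNReal.ofReal_add zero_le_one (Real.log_nonneg hH),
    ENNReal.toReal_ofReal (by linarith [Real.log_nonneg hH]), add_comm]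

end EqualRevenue

section BidIndependentPrice

variable {Ω : Type*} [MeasurableSpace Ω] {μ : Measure Ω} {X Y : Ω → ℝ}

lemma measurable_ite_lt (hX : Measurable X) (hY : Measurable Y) :
    Measurable fun ω => if Y ω < X ω then Y ω else 0 :=
  Measurable.ite (measurableSet_lt hY hX) hY measurable_const

lemma integrable_ite_lt [IsFiniteMeasure μ] (hX : Measurable X) (hY : Measurable Y)
    (hY0 : ∀ ω, 0 ≤ Y ω) {H : ℝ} (hH : 0 ≤ H) (hXH : ∀ ω, X ω ≤ H) :
    Integrable (fun ω => if Y ω < X ω then Y ω else 0) μ :=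
  .of_mem_Icc 0 H (measurable_ite_lt hX hY).aemeasurable <| ae_of_all _ fun ω => by
    split_ifs with h
    exacts [⟨hY0 ω, h.le.trans (hXH ω)⟩, ⟨le_rfl, hH⟩]

lemma lintegral_ofReal_ite_lt (ν : Measure ℝ) (y : ℝ) :
    ∫⁻ x, ENNReal.ofReal (if y < x then y else 0) ∂ν = ENNReal.ofReal y * ν (Ioi y) := by
  rw [← lintegral_indicator_const measurableSet_Ioi]
  congr with x
  by_cases h : y < x <;> simp [h]

lemma lintegral_ofReal_ite_lt_le_of_indepFun [IsProbabilityMeasure μ] (hX : Measurable X)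
    (hY : Measurable Y) (hXY : IndepFun X Y μ) {c : ENNReal}
    (hc : ∀ y, ENNReal.ofReal y * μ {ω | y < X ω} ≤ c) :
    ∫⁻ ω, ENNReal.ofReal (if Y ω < X ω then Y ω else 0) ∂μ ≤ c := by
  set f : ℝ × ℝ → ENNReal := fun p => ENNReal.ofReal (if p.2 < p.1 then p.2 else 0)
  have hf : Measurable f := (measurable_ite_lt measurable_fst measurable_snd).ennreal_ofReal
  have : IsProbabilityMeasure (μ.map Y) := Measure.isProbabilityMeasure_map hY.aemeasurable
  calc ∫⁻ ω, f (X ω, Y ω) ∂μ = ∫⁻ p, f p ∂(μ.map X).prod (μ.map Y) := by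
        rw [← (indepFun_iff_map_prod_eq_prod_map_map hX.aemeasurable hY.aemeasurable).1 hXY,
          lintegral_map hf (hX.prodMk hY)]
    _ = ∫⁻ y, ENNReal.ofReal y * μ {ω | y < X ω} ∂(μ.map Y) := by
        rw [lintegral_prod_symm f hf.aemeasurable]
        congr with y
        rw [lintegral_ofReal_ite_lt, Measure.map_apply hX measurableSet_Ioi]
        rfl
    _ ≤ ∫⁻ _, c ∂(μ.map Y) := lintegral_mono hc
    _ = c := by simp

lemma integral_ite_lt_le_of_indepFun [IsProbabilityMeasure μ] (hX : Measurable X)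
    (hY : Measurable Y) (hY0 : ∀ ω, 0 ≤ Y ω) (hXY : IndepFun X Y μ) {c : ℝ} (hc0 : 0 ≤ c)
    (hc : ∀ y, ENNReal.ofReal y * μ {ω | y < X ω} ≤ ENNReal.ofReal c) :
    ∫ ω, (if Y ω < X ω then Y ω else 0) ∂μ ≤ c := by
  rw [integral_eq_lintegral_of_nonneg_ae (ae_of_all _ fun ω => by split_ifs <;> simp [hY0 ω])
    (measurable_ite_lt hX hY).aestronglyMeasurable]
  exact ENNReal.toReal_le_of_le_ofReal hc0 (lintegral_ofReal_ite_lt_le_of_indepFun hX hY hXY hc)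

end BidIndependentPrice

theorem stmt_16_general {Ω : Type*} [MeasurableSpace Ω] (μ : Measure Ω)
    [IsProbabilityMeasure μ] (H : ℝ) (hH : 1 < H) (n : ℕ)
    (b P : Fin n → Ω → ℝ)
    (hbmeas : ∀ i, Measurable (b i)) (hPmeas : ∀ i, Measurable (P i))
    (hrange : ∀ i ω, b i ω ∈ Set.Icc (1 : ℝ) H)
    (htail : ∀ i, ∀ y ∈ Set.Ico (1 : ℝ) H, μ {ω | y < b i ω} = ENNReal.ofReal (1 / y))
    (hPpos : ∀ i ω, 0 ≤ P i ω)
    (hindep : ∀ i, IndepFun (b i) (P i) μ) :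
    (∫ ω, ∑ i, (if P i ω < b i ω then P i ω else 0) ∂μ) ≤ n ∧
    (∫ ω, ∑ i, b i ω ∂μ) = n * (Real.log H + 1) ∧
    ∃ ω, (∑ i, (if P i ω < b i ω then P i ω else 0))
        ≤ (∑ i, b i ω) / (Real.log H + 1) := by
  have hL : 0 < Real.log H + 1 := by linarith [Real.log_nonneg hH.le]
  have hb_int (i) : Integrable (b i) μ :=
    .of_mem_Icc 1 H (hbmeas i).aemeasurable (ae_of_all _ (hrange i))
  have hrev_int (i) : Integrable (fun ω => if P i ω < b i ω then P i ω else 0) μ :=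
    integrable_ite_lt (hbmeas i) (hPmeas i) (hPpos i) (by linarith) fun ω => (hrange i ω).2
  have hrevenue : (∫ ω, ∑ i, (if P i ω < b i ω then P i ω else 0) ∂μ) ≤ n := by
    rw [integral_finsetSum _ fun i _ => hrev_int i]
    calc ∑ i, ∫ ω, (if P i ω < b i ω then P i ω else 0) ∂μ ≤ ∑ _i : Fin n, (1 : ℝ) :=
          Finset.sum_le_sum fun i _ =>
            integral_ite_lt_le_of_indepFun (hbmeas i) (hPmeas i) (hPpos i) (hindep i)
              zero_le_one (by simpa using ofReal_mul_measure_lt_le_one (hrange i) (htail i))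
      _ = n := by simp
  have hopt : (∫ ω, ∑ i, b i ω ∂μ) = n * (Real.log H + 1) := by
    rw [integral_finsetSum _ fun i _ => hb_int i]
    simp only [integral_eq_log_add_one hH.le (hbmeas _) (hrange _) (htail _), Finset.sum_const,
      Finset.card_univ, Fintype.card_fin, nsmul_eq_mul]
  refine ⟨hrevenue, hopt, ?_⟩
  have hrev_sum_int := integrable_finsetSum Finset.univ fun i _ => hrev_int i
  have hopt_int := (integrable_finsetSum Finset.univ fun i _ => hb_int i).div_const (Real.log H + 1)
  obtain ⟨ω, hω⟩ := exists_le_integral (hrev_sum_int.sub hopt_int)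
  refine ⟨ω, sub_nonpos.1 (hω.trans ?_)⟩
  rw [integral_sub' hrev_sum_int hopt_int, integral_div, hopt, mul_div_cancel_right₀ _ hL.ne']
  linarith

/-- Lower bound for bid-independent auctions on `[1,H]`: with i.i.d. bids with tail
`ℙ(b_i > y) = 1/y` on `[1,H)`, `ℙ(b_i = H) = 1/H`, and prices `P_i` independent of
`b_i`, the expected total revenue is at most `n`, the expected optimal revenue is
`n·(log H + 1)`, and some realization has revenue at most `OPT/(log H + 1)`. -/
theorem stmt_16 {Ω : Type*} [MeasurableSpace Ω] (μ : Measure Ω)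
    [IsProbabilityMeasure μ] (H : ℝ) (hH : 1 < H) (n : ℕ) (hn : 1 ≤ n)
    (b P : Fin n → Ω → ℝ)
    (hbmeas : ∀ i, Measurable (b i)) (hPmeas : ∀ i, Measurable (P i))
    (hiid : iIndepFun b μ)
    (hrange : ∀ i ω, b i ω ∈ Set.Icc (1 : ℝ) H)
    (htail : ∀ i, ∀ y ∈ Set.Ico (1 : ℝ) H, μ {ω | y < b i ω} = ENNReal.ofReal (1 / y))
    (hatom : ∀ i, μ {ω | b i ω = H} = ENNReal.ofReal (1 / H))
    (hPpos : ∀ i ω, 0 ≤ P i ω)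
    (hindep : ∀ i, IndepFun (b i) (P i) μ) :
    (∫ ω, ∑ i, (if P i ω < b i ω then P i ω else 0) ∂μ) ≤ n ∧
    (∫ ω, ∑ i, b i ω ∂μ) = n * (Real.log H + 1) ∧
    ∃ ω, (∑ i, (if P i ω < b i ω then P i ω else 0))
        ≤ (∑ i, b i ω) / (Real.log H + 1) :=
  stmt_16_general μ H hH n b P hbmeas hPmeas hrange htail hPpos hindep
end
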